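/- arXiv:0905.0065 — 4 statements merged into one kernel-verified Lean document; each statement's English description precedes it below -/
import Mathlib

section
/- Let $K$ be a group acting linearly on a $k$-vector space $V$ with a fixed direct sum decomposition $V = U \oplus \widetilde{U}$ (the summands need not be $K$-stable). Suppose that every $K$-submodule of $V$ contained in $U$ has a $K$-stable complement in $V$ containing $\widetilde{U}$. Then $\sigma_K(U)$, the largest $K$-submodule of $V$ contained in $U$, is a semisimple $K$-module. -/
variable (k : Type*) [Field k] (V : Type*) [AddCommGroup V] [Module k V]
  (K : Type*) [Group K] [DistribMulAction K V] [SMulCommClass K k V]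

/-- A subspace of `V` is `K`-stable (a `K`-submodule) if it is closed under the action. -/
def IsKStable (p : Submodule k V) : Prop := ∀ (g : K) (v : V), v ∈ p → g • v ∈ p

/-- `σ_K(U)`: the sum of all `K`-submodules of `V` contained in `U`. -/
def sigmaK (U : Submodule k V) : Submodule k V :=
  sSup {p : Submodule k V | IsKStable k V K p ∧ p ≤ U}

/-- `ι_K(U)`: the intersection of all `K`-submodules of `V` containing `U`. -/
def iotaK (U : Submodule k V) : Submodule k V :=
  sInf {p : Submodule k V | IsKStable k V K p ∧ U ≤ p}

/-- A `K`-submodule `N` of `V` is a semisimple `K`-module: every `K`-submodule of `V`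
contained in `N` has a `K`-stable complement within `N`. -/
def IsKSemisimpleOn (N : Submodule k V) : Prop :=
  ∀ W : Submodule k V, IsKStable k V K W → W ≤ N →
    ∃ W' : Submodule k V, IsKStable k V K W' ∧ W' ≤ N ∧ W ⊓ W' = ⊥ ∧ W ⊔ W' = N

lemma sigmaK_le (U : Submodule k V) : sigmaK k V K U ≤ U :=
  sSup_le fun _ hp => hp.2

lemma sigmaK_stable (U : Submodule k V) : IsKStable k V K (sigmaK k V K U) := by
  intro g v hv
  have : (sigmaK k V K U).map (DistribMulAction.toLinearMap k V g) ≤ sigmaK k V K U := by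
    rw [Submodule.map_le_iff_le_comap]
    apply sSup_le
    rintro p hp
    rw [← Submodule.map_le_iff_le_comap]
    refine le_trans ?_ (le_sSup hp)
    rintro x ⟨y, hy, rfl⟩
    exact hp.1 g y hy
  exact this ⟨v, hv, rfl⟩

lemma inf_stable {p q : Submodule k V} (hp : IsKStable k V K p) (hq : IsKStable k V K q) :
    IsKStable k V K (p ⊓ q) := fun g v hv => ⟨hp g v hv.1, hq g v hv.2⟩

/-- If `V = U ⊕ Ũ` (as vector spaces) and every `K`-submodule of `V` contained in `U` has
a `K`-stable complement in `V` containing `Ũ`, then `σ_K(U)` is a semisimple `K`-module. -/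
theorem stmt_6 (U Ut : Submodule k V) (hUV : IsCompl U Ut)
    (h : ∀ W : Submodule k V, IsKStable k V K W → W ≤ U →
      ∃ W' : Submodule k V, IsKStable k V K W' ∧ IsCompl W W' ∧ Ut ≤ W') :
    IsKSemisimpleOn k V K (sigmaK k V K U) := by
  intro W hW hWle
  obtain ⟨C, hC, hcompl, _⟩ := h W hW (hWle.trans (sigmaK_le k V K U))
  refine ⟨C ⊓ sigmaK k V K U, inf_stable k V K hC (sigmaK_stable k V K U), inf_le_right, ?_, ?_⟩
  · rw [← inf_assoc]
    simp [hcompl.inf_eq_bot]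
  · rw [← sup_inf_assoc_of_le _ hWle, hcompl.sup_eq_top, top_inf_eq]
end

section
/- Let $K$ be a group acting linearly on a $k$-vector space $V$ with a fixed direct sum decomposition $V = U \oplus \widetilde{U}$. Suppose (i) $\sigma_K(U)$ is a semisimple $K$-module and (ii) $V = \sigma_K(U) \oplus \iota_K(\widetilde{U})$. Then every $K$-submodule $W$ of $V$ contained in $U$ has a $K$-stable complement in $V$ containing $\widetilde{U}$. -/
variable (k : Type*) [Field k] (V : Type*) [AddCommGroup V] [Module k V]
  (K : Type*) [Group K] [DistribMulAction K V] [SMulCommClass K k V]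

/-- If `V = U ⊕ Ũ`, `σ_K(U)` is a semisimple `K`-module and `V = σ_K(U) ⊕ ι_K(Ũ)`, then
every `K`-submodule of `V` contained in `U` has a `K`-stable complement containing `Ũ`. -/
theorem stmt_9 (U Ut : Submodule k V) (hUV : IsCompl U Ut)
    (hss : IsKSemisimpleOn k V K (sigmaK k V K U))
    (hdec : IsCompl (sigmaK k V K U) (iotaK k V K Ut)) :
    ∀ W : Submodule k V, IsKStable k V K W → W ≤ U →
      ∃ W' : Submodule k V, IsKStable k V K W' ∧ IsCompl W W' ∧ Ut ≤ W' := by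
  intro W hWst hWU
  have hWσ : W ≤ sigmaK k V K U := le_sSup ⟨hWst, hWU⟩
  obtain ⟨W', hW'st, hW'σ, hinf, hsup⟩ := hss W hWst hWσ
  have hιst : IsKStable k V K (iotaK k V K Ut) := by
    intro g v hv
    simp only [iotaK, Submodule.mem_sInf] at hv ⊢
    intro p hp
    exact hp.1 g v (hv p hp)
  have hUtι : Ut ≤ iotaK k V K Ut := le_sInf fun p hp => hp.2
  refine ⟨W' ⊔ iotaK k V K Ut, ?_, ⟨?_, ?_⟩, le_sup_of_le_right hUtι⟩
  · intro g v hv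
    rw [Submodule.mem_sup] at hv ⊢
    obtain ⟨a, ha, b, hb, rfl⟩ := hv
    exact ⟨g • a, hW'st g a ha, g • b, hιst g b hb, (smul_add g a b).symm⟩
  · rw [disjoint_iff]
    have h1 : sigmaK k V K U ⊓ (W' ⊔ iotaK k V K Ut) = W' := by
      rw [inf_comm, sup_inf_assoc_of_le _ hW'σ,
        inf_comm, disjoint_iff.mp hdec.disjoint, sup_bot_eq]
    have : W ⊓ (W' ⊔ iotaK k V K Ut) ≤ W ⊓ W' := by
      refine le_inf inf_le_left ?_
      calc W ⊓ (W' ⊔ iotaK k V K Ut) ≤ sigmaK k V K U ⊓ (W' ⊔ iotaK k V K Ut) :=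
            inf_le_inf_right _ hWσ
        _ = W' := h1
    exact le_bot_iff.mp (hinf ▸ this)
  · rw [codisjoint_iff, ← sup_assoc, hsup, codisjoint_iff.mp hdec.codisjoint]
end

section
/- Let $K$ be a group acting linearly on a $k$-vector space $V$ with a fixed direct sum decomposition $V = U \oplus \widetilde{U}$. Suppose (i) $\sigma_K(U)$ is a semisimple $K$-module and (ii) $V = \sigma_K(U) \oplus \iota_K(\widetilde{U})$. Then every $K$-submodule $W$ of $V$ containing $\widetilde{U}$ has a $K$-stable complement in $V$ contained in $U$. -/
variable (k : Type*) [Field k] (V : Type*) [AddCommGroup V] [Module k V]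
  (K : Type*) [Group K] [DistribMulAction K V] [SMulCommClass K k V]

/-- If `V = U ⊕ Ũ`, `σ_K(U)` is a semisimple `K`-module and `V = σ_K(U) ⊕ ι_K(Ũ)`, then
every `K`-submodule of `V` containing `Ũ` has a `K`-stable complement contained in `U`. -/
theorem stmt_10 (U Ut : Submodule k V) (hUV : IsCompl U Ut)
    (hss : IsKSemisimpleOn k V K (sigmaK k V K U))
    (hdec : IsCompl (sigmaK k V K U) (iotaK k V K Ut)) :
    ∀ W : Submodule k V, IsKStable k V K W → Ut ≤ W →
      ∃ W' : Submodule k V, IsKStable k V K W' ∧ IsCompl W W' ∧ W' ≤ U := by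
  intro W hW hUtW
  set S := sigmaK k V K U with hS
  have hSU : S ≤ U := sSup_le fun p hp => hp.2
  have hSstable : IsKStable k V K S := by
    intro g v hv
    have hmap : Submodule.map (DistribMulAction.toLinearMap k V g) S ≤ S := by
      rw [hS, sigmaK, sSup_eq_iSup', Submodule.map_iSup]
      refine iSup_le fun p => ?_
      refine le_trans ?_ (le_iSup (fun (q : {p : Submodule k V // IsKStable k V K p ∧ p ≤ U}) => q.1) p)
      rintro x ⟨y, hy, rfl⟩
      exact p.2.1 g y hy
    exact hmap ⟨v, hv, rfl⟩
  have hWS : IsKStable k V K (W ⊓ S) := fun g v hv => ⟨hW g v hv.1, hSstable g v hv.2⟩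
  obtain ⟨W', hW's, hW'S, hdisj, hsup⟩ := hss (W ⊓ S) hWS inf_le_right
  have hiW : iotaK k V K Ut ≤ W := sInf_le ⟨hW, hUtW⟩
  refine ⟨W', hW's, ⟨disjoint_iff.2 ?_, codisjoint_iff.2 ?_⟩, hW'S.trans hSU⟩
  · have h1 : W ⊓ W' ≤ (W ⊓ S) ⊓ W' :=
      le_inf (le_inf inf_le_left (inf_le_right.trans hW'S)) inf_le_right
    rw [hdisj] at h1
    exact le_bot_iff.1 h1
  · have h2 : S ≤ W ⊔ W' := by
      rw [← hsup]; exact sup_le (inf_le_left.trans le_sup_left) le_sup_right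
    have h3 : (⊤ : Submodule k V) = S ⊔ iotaK k V K Ut := (codisjoint_iff.1 hdec.2).symm
    rw [eq_top_iff, h3]
    exact sup_le h2 (hiW.trans le_sup_left)
end

section
/- Let $K$ be a group acting linearly on a $k$-vector space $V$, and suppose $V$ is a semisimple $K$-module. Let $U$ be a $K$-submodule of $V$ and $\widetilde{U}$ a vector-space complement to $U$ in $V$ (not assumed $K$-stable). Then the pair of conditions — (i) every $K$-submodule of $V$ contained in $U$ has a $K$-stable complement containing $\widetilde{U}$, and (ii) every $K$-submodule of $V$ containing $\widetilde{U}$ has a $K$-stable complement contained in $U$ — holds if and only if $\widetilde{U}$ is a $K$-submodule of $V$. -/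
variable (k : Type*) [Field k] (V : Type*) [AddCommGroup V] [Module k V]
  (K : Type*) [Group K] [DistribMulAction K V] [SMulCommClass K k V]

/-- Suppose `V` is a semisimple `K`-module, `U` is a `K`-submodule of `V`, and `Ũ` is a
vector-space complement to `U` in `V`.  Then conditions (i) and (ii) (every `K`-submodule
contained in `U` has a `K`-stable complement containing `Ũ`, and every `K`-submodule
containing `Ũ` has a `K`-stable complement contained in `U`) hold if and only if `Ũ` is a
`K`-submodule of `V`. -/
theorem stmt_12 (hVss : ∀ W : Submodule k V, IsKStable k V K W →
      ∃ W' : Submodule k V, IsKStable k V K W' ∧ IsCompl W W')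
    (U Ut : Submodule k V) (hU : IsKStable k V K U) (hUV : IsCompl U Ut) :
    ((∀ W : Submodule k V, IsKStable k V K W → W ≤ U →
        ∃ W' : Submodule k V, IsKStable k V K W' ∧ IsCompl W W' ∧ Ut ≤ W') ∧
     (∀ W : Submodule k V, IsKStable k V K W → Ut ≤ W →
        ∃ W' : Submodule k V, IsKStable k V K W' ∧ IsCompl W W' ∧ W' ≤ U)) ↔
    IsKStable k V K Ut := by
  constructor
  · rintro ⟨h1, -⟩
    obtain ⟨W', hW's, hcompl, hle⟩ := h1 U hU le_rfl
    have hUW' : U ⊓ W' = ⊥ := hcompl.disjoint.eq_bot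
    have hmod : (Ut ⊔ U) ⊓ W' = Ut ⊔ (U ⊓ W') := sup_inf_assoc_of_le U hle
    have hsup : Ut ⊔ U = ⊤ := by rw [sup_comm]; exact hUV.sup_eq_top
    rw [hsup, hUW', sup_bot_eq, top_inf_eq] at hmod
    exact hmod ▸ hW's
  · intro hUt
    have stable_sup : ∀ p q : Submodule k V, IsKStable k V K p → IsKStable k V K q →
        IsKStable k V K (p ⊔ q) := by
      intro p q hp hq g v hv
      obtain ⟨x, hx, y, hy, rfl⟩ := Submodule.mem_sup.mp hv
      rw [smul_add]
      exact Submodule.add_mem_sup (hp g x hx) (hq g y hy)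
    have stable_inf : ∀ p q : Submodule k V, IsKStable k V K p → IsKStable k V K q →
        IsKStable k V K (p ⊓ q) := fun p q hp hq g v hv => ⟨hp g v hv.1, hq g v hv.2⟩
    constructor
    · intro W hW hWU
      obtain ⟨C, hCs, hCc⟩ := hVss (W ⊔ Ut) (stable_sup _ _ hW hUt)
      refine ⟨Ut ⊔ C, stable_sup _ _ hUt hCs, ⟨?_, ?_⟩, le_sup_left⟩
      · -- disjointness
        rw [disjoint_iff]
        have h1 : (Ut ⊔ C) ⊓ (W ⊔ Ut) = Ut ⊔ (C ⊓ (W ⊔ Ut)) :=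
          sup_inf_assoc_of_le C le_sup_right
        have h2 : C ⊓ (W ⊔ Ut) = ⊥ := by
          rw [inf_comm]; exact hCc.disjoint.eq_bot
        rw [h2, sup_bot_eq] at h1
        have h3 : W ⊓ (Ut ⊔ C) ≤ W ⊓ Ut := by
          refine le_inf inf_le_left ?_
          calc W ⊓ (Ut ⊔ C) ≤ (W ⊔ Ut) ⊓ (Ut ⊔ C) := inf_le_inf_right _ le_sup_left
            _ = Ut := by rw [inf_comm]; exact h1
        have h4 : W ⊓ Ut = ⊥ := by
          have := hUV.disjoint.mono_left hWU
          exact this.eq_bot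
        exact le_bot_iff.mp (h4 ▸ h3)
      · -- codisjointness
        rw [codisjoint_iff, ← sup_assoc]
        exact hCc.sup_eq_top
    · intro W hW hUtW
      obtain ⟨C, hCs, hCc⟩ := hVss (W ⊓ U) (stable_inf _ _ hW hU)
      refine ⟨C ⊓ U, stable_inf _ _ hCs hU, ⟨?_, ?_⟩, inf_le_right⟩
      · rw [disjoint_iff]
        have : W ⊓ (C ⊓ U) = (W ⊓ U) ⊓ C := by
          rw [inf_comm C U, ← inf_assoc]
        rw [this]
        exact hCc.disjoint.eq_bot
      · rw [codisjoint_iff]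
        have hsplit : (W ⊓ U ⊔ C) ⊓ U = (W ⊓ U) ⊔ (C ⊓ U) :=
          sup_inf_assoc_of_le C inf_le_right
        rw [hCc.sup_eq_top, top_inf_eq] at hsplit
        have : W ⊔ (C ⊓ U) = ⊤ := by
          have h1 : Ut ⊔ ((W ⊓ U) ⊔ (C ⊓ U)) ≤ W ⊔ (C ⊓ U) := by
            rw [← sup_assoc]
            exact sup_le_sup_right (sup_le hUtW inf_le_left) _
          rw [← hsplit, sup_comm Ut U, hUV.sup_eq_top] at h1
          exact top_le_iff.mp h1
        exact this
end
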